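/- Every element g of the structure group G of a finite cycle set can be written as a left fraction g = f h⁻¹ with f, h in the structure monoid, using the rewriting rule s⁻¹ t = (s*t)(t*s)⁻¹ valid in G. -/

import Mathlib

/-- Dehornoy's `Ω` expression: `Omega op k t` is `Ω_{k+1}(t 0, …, t k)`,
defined by `Ω_1(x) = x` and
`Ω_k(x_1,…,x_k) = Ω_{k-1}(x_1,…,x_{k-1}) * Ω_{k-1}(x_1,…,x_{k-2},x_k)`. -/
def Omega {S : Type*} (op : S → S → S) : (k : ℕ) → (Fin (k + 1) → S) → S
  | 0, t => t 0
  | k + 1, t =>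
      op (Omega op k fun i => t i.castSucc)
        (Omega op k fun i =>
          if i = Fin.last k then t (Fin.last (k + 1)) else t i.castSucc)

/-- Dehornoy's `Π` expression: `PiExpr op ι k t = ι(Ω_1(t_1)) ⋯ ι(Ω_k(t_1,…,t_k))`. -/
def PiExpr {S M : Type*} [Monoid M] (op : S → S → S) (ι : S → M) :
    (k : ℕ) → (Fin k → S) → M
  | 0, _ => 1
  | k + 1, t => PiExpr op ι k (fun i => t i.castSucc) * ι (Omega op k t)

/-- The defining relations of the structure monoid: `s (s*t) = t (t*s)`. -/
def csRel {S : Type*} (op : S → S → S) (a b : FreeMonoid S) : Prop :=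
  ∃ s t : S, a = FreeMonoid.of s * FreeMonoid.of (op s t) ∧
    b = FreeMonoid.of t * FreeMonoid.of (op t s)

/-- The structure monoid `⟨S ∣ s(s*t) = t(t*s)⟩⁺` of a cycle set. -/
abbrev StructureMonoid {S : Type*} (op : S → S → S) := (conGen (csRel op)).Quotient

/-- The canonical generators of the structure monoid. -/
def mkM {S : Type*} (op : S → S → S) (s : S) : StructureMonoid op :=
  (conGen (csRel op)).mk' (FreeMonoid.of s)
/-- The defining relators of the structure group: `s (s*t) (t (t*s))⁻¹`. -/
def csGrpRels {S : Type*} (op : S → S → S) : Set (FreeGroup S) :=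
  { r | ∃ s t : S, r = FreeGroup.of s * FreeGroup.of (op s t) *
      (FreeGroup.of t * FreeGroup.of (op t s))⁻¹ }

/-- The structure group `⟨S ∣ s(s*t) = t(t*s)⟩` of a cycle set. -/
abbrev StructureGroup {S : Type*} (op : S → S → S) := PresentedGroup (csGrpRels op)

/-!
In the structure group the defining relation `s (s*t) = t (t*s)` gives
`s⁻¹ t = (s*t) (t*s)⁻¹`, so a right fraction `h⁻¹ f` of monoid elements can be rewritten as a
left fraction by pushing the letters of `h` and `f` past each other one at a time. Hence left
fractions are closed under products; they are closed under inverses and contain the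
generators, so they exhaust the group.
-/

section LeftFractions

variable {S : Type*} {op : S → S → S}

theorem mkM_mul_mkM_op (s t : S) :
    mkM op s * mkM op (op s t) = mkM op t * mkM op (op t s) :=
  (Con.eq _).mpr <| ConGen.Rel.of _ _ ⟨s, t, rfl, rfl⟩

@[elab_as_elim]
theorem StructureMonoid.induction_on {motive : StructureMonoid op → Prop}
    (x : StructureMonoid op) (one : motive 1)
    (mkM_mul : ∀ s x, motive x → motive (mkM op s * x)) : motive x := by
  induction x using Con.induction_on with
  | H w =>
    induction w using FreeMonoid.inductionOn' with
    | one => exact one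
    | of_mul s w ih => exact mkM_mul s w ih

variable {G : Type*} [Group G] (φ : StructureMonoid op →* G)

theorem exists_inv_mul_mkM_eq (h : StructureMonoid op) (t : S) :
    ∃ a b : StructureMonoid op, (φ h)⁻¹ * φ (mkM op t) = φ a * (φ b)⁻¹ := by
  induction h using StructureMonoid.induction_on generalizing t with
  | one => exact ⟨mkM op t, 1, by simp⟩
  | mkM_mul s h ih =>
    have swap : (φ (mkM op s))⁻¹ * φ (mkM op t)
        = φ (mkM op (op s t)) * (φ (mkM op (op t s)))⁻¹ := by
      rw [inv_mul_eq_iff_eq_mul, ← mul_assoc, ← map_mul, mkM_mul_mkM_op, map_mul,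
        mul_inv_cancel_right]
    obtain ⟨a, b, hab⟩ := ih (op s t)
    refine ⟨a, mkM op (op t s) * b, ?_⟩
    rw [map_mul, mul_inv_rev, mul_assoc, swap, ← mul_assoc, hab, map_mul, mul_inv_rev,
      mul_assoc]

theorem exists_inv_mul_eq (h f : StructureMonoid op) :
    ∃ a b : StructureMonoid op, (φ h)⁻¹ * φ f = φ a * (φ b)⁻¹ := by
  induction f using StructureMonoid.induction_on generalizing h with
  | one => exact ⟨1, h, by simp⟩
  | mkM_mul t f ih =>
    obtain ⟨a, b, hab⟩ := exists_inv_mul_mkM_eq φ h t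
    obtain ⟨c, d, hcd⟩ := ih b
    refine ⟨a * c, d, ?_⟩
    rw [map_mul, ← mul_assoc, hab, mul_assoc, hcd, map_mul, mul_assoc]

def leftFractions : Subgroup G where
  carrier := {g | ∃ f h : StructureMonoid op, g = φ f * (φ h)⁻¹}
  one_mem' := ⟨1, 1, by simp⟩
  mul_mem' := by
    rintro _ _ ⟨f, h, rfl⟩ ⟨f', h', rfl⟩
    obtain ⟨a, b, hab⟩ := exists_inv_mul_eq φ h f'
    refine ⟨f * a, h' * b, ?_⟩
    calc φ f * (φ h)⁻¹ * (φ f' * (φ h')⁻¹)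
        = φ f * ((φ h)⁻¹ * φ f') * (φ h')⁻¹ := by group
      _ = φ (f * a) * (φ (h' * b))⁻¹ := by
          rw [hab, map_mul, map_mul, mul_inv_rev]; group
  inv_mem' := by
    rintro _ ⟨f, h, rfl⟩
    exact ⟨h, f, by group⟩

theorem mem_leftFractions {g : G} :
    g ∈ leftFractions φ ↔ ∃ f h : StructureMonoid op, g = φ f * (φ h)⁻¹ :=
  Iff.rfl

end LeftFractions

theorem left_fraction_general {S : Type*} (op : S → S → S)
    (φ : StructureMonoid op →* StructureGroup op)
    (hφ : ∀ s : S, φ (mkM op s) = PresentedGroup.of (rels := csGrpRels op) s)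
    (g : StructureGroup op) :
    ∃ f h : StructureMonoid op, g = φ f * (φ h)⁻¹ := by
  have generators_mem :
      Set.range (PresentedGroup.of (rels := csGrpRels op)) ⊆ leftFractions φ := by
    rintro _ ⟨s, rfl⟩
    exact ⟨mkM op s, 1, by simp [hφ]⟩
  have eq_top : leftFractions φ = ⊤ := by
    rw [eq_top_iff, ← PresentedGroup.closure_range_of]
    exact (Subgroup.closure_le _).mpr generators_mem
  exact (mem_leftFractions φ).mp (eq_top ▸ Subgroup.mem_top g)

/-- Every element of the structure group of a finite cycle set is a left fraction
`f h⁻¹` of elements of the structure monoid. -/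
theorem left_fraction {S : Type*} [Fintype S] (op : S → S → S)
    (hbij : ∀ s : S, Function.Bijective (op s))
    (hcs : ∀ s t u : S, op (op s t) (op s u) = op (op t s) (op t u))
    (φ : StructureMonoid op →* StructureGroup op)
    (hφ : ∀ s : S, φ (mkM op s) = PresentedGroup.of (rels := csGrpRels op) s)
    (g : StructureGroup op) :
    ∃ f h : StructureMonoid op, g = φ f * (φ h)⁻¹ :=
  left_fraction_general op φ hφ g
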